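/- Let \u03b1\u2081, \u2026, \u03b1\u2088 \u2208 \u2102 be the roots, counted with multiplicity, of h = X\u2078 + 2X\u2077 + 2X\u2076 \u2212 4X\u2074 + 8X\u00b2 + 16X + 16. For n = 2 and for n = 3, the monic polynomial \u220f_{i=1}^{8} (X \u2212 \u03b1\u1d62\u207f) \u2208 \u2102[X] has rational coefficients, and the corresponding polynomial in \u211a[X] is irreducible. -/

import Mathlib

/-!
Evaluating `∏ (X - αᵢⁿ)` at `yⁿ` and splitting `yⁿ - αⁿ` over the `n`-th roots of unity gives
`h(y) h(-y)` for `n = 2` and `h(y) h(ωy) h(ω²y)` for `n = 3`. These equal `2⁸ Φ₂₀(y²/2)` and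
`2⁸ h(-y³/2)`, so the two polynomials are `2⁸ Φ₂₀(X/2)` and `2⁸ h(-X/2)`. Irreducibility is invariant under `X ↦ cX`, so it remains to see that `h` is
irreducible over `ℚ`: for a root `α` of `h`, `α²` is a root of the irreducible octic
`2⁸ Φ₂₀(X/2)`, so `[ℚ(α) : ℚ] ≥ 8 = deg h`.
-/

open Polynomial

/-- The Weil 2-polynomial `h = X⁸ + 2X⁷ + 2X⁶ − 4X⁴ + 8X² + 16X + 16`, over `ℂ`. -/
noncomputable def weilH : Polynomial ℂ :=
  X ^ 8 + 2 * X ^ 7 + 2 * X ^ 6 - 4 * X ^ 4 + 8 * X ^ 2 + 16 * X + 16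

open Finset

section RootPowers

variable {R : Type*} [CommRing R] [IsDomain R] {ζ : R} {n : ℕ}

theorem IsPrimitiveRoot.pow_sub_pow_eq_neg_one_pow_mul_prod (hζ : IsPrimitiveRoot ζ n)
    (hn : 0 < n) (y a : R) :
    y ^ n - a ^ n = (-1) ^ (n + 1) * ∏ i ∈ range n, (ζ ^ i * y - a) := by
  have h := congrArg (eval a) (X_pow_sub_C_eq_prod hζ hn (rfl : y ^ n = y ^ n))
  simp only [eval_sub, eval_pow, eval_X, eval_C, eval_prod] at h
  have hneg : ∏ i ∈ range n, (ζ ^ i * y - a) = (-1) ^ n * ∏ i ∈ range n, (a - ζ ^ i * y) := by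
    simpa only [neg_sub, card_range] using prod_neg (s := range n) fun i => a - ζ ^ i * y
  rw [hneg, ← h, ← mul_assoc, ← pow_add, show n + 1 + n = 2 * n + 1 by ring, pow_succ, pow_mul]
  ring

theorem Polynomial.eval_pow_multiset_prod_X_sub_C_pow (hζ : IsPrimitiveRoot ζ n) (hn : 0 < n)
    (s : Multiset R) (y : R) :
    ((s.map fun a => X - C (a ^ n)).prod).eval (y ^ n) =
      (-1) ^ (Multiset.card s * (n + 1)) *
        ∏ i ∈ range n, ((s.map fun a => X - C a).prod).eval (ζ ^ i * y) := by
  induction s using Multiset.induction_on with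
  | empty => simp
  | cons a s ih =>
    simp only [Multiset.map_cons, Multiset.prod_cons, eval_mul, eval_sub, eval_X, eval_C,
      Multiset.card_cons, prod_mul_distrib, ih, hζ.pow_sub_pow_eq_neg_one_pow_mul_prod hn]
    ring

end RootPowers

theorem Polynomial.eq_of_eval_pow_eq {K : Type*} [Field K] [IsAlgClosed K] {n : ℕ} (hn : 0 < n)
    {f g : K[X]} (h : ∀ y, f.eval (y ^ n) = g.eval (y ^ n)) : f = g :=
  Polynomial.funext fun x => by
    obtain ⟨y, rfl⟩ := IsAlgClosed.exists_pow_nat_eq x hn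
    exact h y

theorem Polynomial.irreducible_C_mul_comp_C_mul_X {K : Type*} [Field K] {p : K[X]}
    (hp : Irreducible p) {a c : K} (ha : a ≠ 0) (hc : c ≠ 0) :
    Irreducible (C c * p.comp (C a * X)) := by
  let := invertibleOfNonzero ha
  rw [irreducible_isUnit_mul (isUnit_C.mpr hc.isUnit)]
  simpa [comp_eq_aeval] using
    (MulEquiv.irreducible_iff (algEquivCMulXAddC a 0).toMulEquiv).mpr hp

section MinpolyDegree

open IntermediateField

variable {K L : Type*} [Field K] [Field L] [Algebra K L]

theorem minpoly.natDegree_le_of_mem_adjoin {x y : L} (hx : IsIntegral K x) (hy : y ∈ K⟮x⟯) :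
    (minpoly K y).natDegree ≤ (minpoly K x).natDegree := by
  by_cases hyi : IsIntegral K y
  · have := adjoin.finiteDimensional hx
    rw [← adjoin.finrank hx, ← adjoin.finrank hyi]
    exact finrank_le_of_le_right (adjoin_simple_le_iff.mpr hy)
  · simp [minpoly.eq_zero hyi]

theorem Polynomial.Monic.irreducible_of_aeval_eq_zero_of_mem_adjoin {p q : K[X]} (hp : p.Monic)
    (hq : Irreducible q) (hdeg : p.natDegree ≤ q.natDegree) {x y : L} (hx : aeval x p = 0)
    (hy : y ∈ K⟮x⟯) (hqy : aeval y q = 0) : Irreducible p := by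
  have hxi : IsIntegral K x := ⟨p, hp, by rwa [← aeval_def]⟩
  have hq_deg : q.natDegree = (minpoly K y).natDegree := by
    rw [minpoly.Irreducible.eq_minpoly hq hqy,
      natDegree_C_mul (leadingCoeff_ne_zero.mpr hq.ne_zero)]
  have hmin : p = minpoly K x :=
    eq_of_monic_of_dvd_of_natDegree_le (minpoly.monic hxi) hp (minpoly.dvd K x hx)
      (hdeg.trans (hq_deg ▸ minpoly.natDegree_le_of_mem_adjoin hxi hy))
  exact hmin ▸ minpoly.irreducible hxi

end MinpolyDegree

theorem cyclotomic_ten : cyclotomic 10 ℚ = X ^ 4 - X ^ 3 + X ^ 2 - X + 1 := by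
  have : Fact (Nat.Prime 5) := ⟨by norm_num⟩
  apply mul_right_cancel₀ (cyclotomic_ne_zero 5 ℚ)
  rw [show 10 = 5 * 2 by rfl, ← cyclotomic_expand_eq_cyclotomic_mul Nat.prime_two (by norm_num),
    cyclotomic_prime]
  simp only [sum_range_succ, range_one, sum_singleton, pow_zero, pow_one, map_add, map_one,
    expand_X, map_pow]
  ring

theorem cyclotomic_twenty : cyclotomic 20 ℚ = X ^ 8 - X ^ 6 + X ^ 4 - X ^ 2 + 1 := by
  rw [show 20 = 10 * 2 by rfl, ← cyclotomic_expand_eq_cyclotomic Nat.prime_two (by norm_num),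
    cyclotomic_ten]
  simp only [map_add, map_sub, map_pow, expand_X, map_one]
  ring

noncomputable def weilHRat : ℚ[X] :=
  X ^ 8 + 2 * X ^ 7 + 2 * X ^ 6 - 4 * X ^ 4 + 8 * X ^ 2 + 16 * X + 16

noncomputable def weilHSq : ℚ[X] := C 256 * (cyclotomic 20 ℚ).comp (C (1 / 2) * X)

noncomputable def weilHCube : ℚ[X] := C 256 * weilHRat.comp (C (-1 / 2) * X)

theorem map_weilHRat : weilHRat.map (algebraMap ℚ ℂ) = weilH := by
  simp [weilHRat, weilH]

theorem weilHRat_monic : weilHRat.Monic := by unfold weilHRat; monicity!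

theorem weilHRat_natDegree : weilHRat.natDegree = 8 := by unfold weilHRat; compute_degree!

theorem weilHSq_natDegree : weilHSq.natDegree = 8 := by
  rw [weilHSq, natDegree_C_mul (by norm_num), natDegree_comp, natDegree_cyclotomic,
    natDegree_C_mul_X _ (by norm_num)]
  decide

theorem weilH_monic : weilH.Monic := map_weilHRat ▸ weilHRat_monic.map _

theorem weilH_natDegree : weilH.natDegree = 8 := by
  rw [← map_weilHRat, natDegree_map, weilHRat_natDegree]

theorem prod_roots_weilH : (weilH.roots.map fun a => X - C a).prod = weilH :=
  ((IsAlgClosed.splits weilH).eq_prod_roots_of_monic weilH_monic).symm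

theorem card_roots_weilH : Multiset.card weilH.roots = 8 := by
  rw [← weilH_natDegree, splits_iff_card_roots.mp (IsAlgClosed.splits weilH)]

theorem eval_map_weilHSq (y : ℂ) :
    (weilHSq.map (algebraMap ℚ ℂ)).eval (y ^ 2) = weilH.eval y * weilH.eval (-y) := by
  simp only [weilHSq, cyclotomic_twenty, weilH, add_comp, sub_comp, pow_comp, X_comp, one_comp,
    Polynomial.map_mul, map_C, Polynomial.map_add, Polynomial.map_sub, Polynomial.map_pow,
    map_X, Polynomial.map_one, eval_mul, eval_C, eval_add, eval_sub,
    eval_pow, eval_X, eval_one, eval_ofNat, eq_ratCast, one_div, map_inv₀, Rat.cast_ofNat]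
  ring

theorem eval_weilH_mul_of_sq_add_add_one {ω : ℂ} (hω : ω ^ 2 + ω + 1 = 0) (y : ℂ) :
    weilH.eval (ω * y) = (16 - 8 * y ^ 2 + 2 * y ^ 6 - y ^ 8) +
      ω * (16 * y - 8 * y ^ 2 - 4 * y ^ 4 + 2 * y ^ 7 - y ^ 8) := by
  simp only [weilH, eval_add, eval_sub, eval_pow, eval_X, eval_mul, eval_ofNat]
  -- reduce `ω ^ k` using `ω ^ 3 - 1 = (ω - 1) (ω ^ 2 + ω + 1)`, then `ω ^ 2 = -1 - ω`
  linear_combination (y ^ 8 * (ω ^ 2 * (ω - 1) * (ω ^ 3 + 1) + 1) +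
    2 * y ^ 7 * ω * (ω - 1) * (ω ^ 3 + 1) + 2 * y ^ 6 * (ω - 1) * (ω ^ 3 + 1) -
    4 * y ^ 4 * ω * (ω - 1) + 8 * y ^ 2) * hω

theorem eval_map_weilHCube {ω : ℂ} (hω : ω ^ 2 + ω + 1 = 0) (y : ℂ) :
    (weilHCube.map (algebraMap ℚ ℂ)).eval (y ^ 3) =
      weilH.eval y * weilH.eval (ω * y) * weilH.eval (ω ^ 2 * y) := by
  have hω_sq : (ω ^ 2) ^ 2 + ω ^ 2 + 1 = 0 := by linear_combination (ω ^ 2 - ω + 1) * hω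
  rw [eval_weilH_mul_of_sq_add_add_one hω, eval_weilH_mul_of_sq_add_add_one hω_sq]
  set A := 16 - 8 * y ^ 2 + 2 * y ^ 6 - y ^ 8
  set B := 16 * y - 8 * y ^ 2 - 4 * y ^ 4 + 2 * y ^ 7 - y ^ 8
  have hnorm : (A + ω * B) * (A + ω ^ 2 * B) = A ^ 2 - A * B + B ^ 2 := by
    linear_combination (A * B + (ω - 1) * B ^ 2) * hω
  rw [mul_assoc, hnorm]
  simp only [weilHCube, weilHRat, weilH, A, B, add_comp, sub_comp, pow_comp, X_comp, mul_comp,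
    ofNat_comp, Polynomial.map_mul, map_C, Polynomial.map_add, Polynomial.map_sub,
    Polynomial.map_pow, map_X, Polynomial.map_ofNat, eval_mul, eval_C, eval_add, eval_sub,
    eval_pow, eval_X, eval_ofNat, eq_ratCast, map_div₀, Rat.cast_neg, Rat.cast_one,
    Rat.cast_ofNat, Nat.cast_ofNat]
  ring

theorem prod_roots_sq_weilH :
    (weilH.roots.map fun a => X - C (a ^ 2)).prod = weilHSq.map (algebraMap ℚ ℂ) := by
  refine eq_of_eval_pow_eq two_pos fun y => ?_
  rw [eval_pow_multiset_prod_X_sub_C_pow (IsPrimitiveRoot.neg_one 0 (by norm_num)) two_pos,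
    prod_roots_weilH, card_roots_weilH, eval_map_weilHSq]
  norm_num [prod_range_succ]

theorem prod_roots_cube_weilH :
    (weilH.roots.map fun a => X - C (a ^ 3)).prod = weilHCube.map (algebraMap ℚ ℂ) := by
  have hζ := Complex.isPrimitiveRoot_exp 3 (by norm_num)
  have hω := hζ.geom_sum_eq_zero (by norm_num)
  simp only [sum_range_succ, range_zero, sum_empty] at hω
  refine eq_of_eval_pow_eq three_pos fun y => ?_
  rw [eval_pow_multiset_prod_X_sub_C_pow hζ three_pos, prod_roots_weilH, card_roots_weilH,
    eval_map_weilHCube (by linear_combination hω)]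
  norm_num [prod_range_succ]

theorem irreducible_weilHSq : Irreducible weilHSq :=
  irreducible_C_mul_comp_C_mul_X (cyclotomic.irreducible_rat (by norm_num))
    (by norm_num) (by norm_num)

theorem irreducible_weilHRat : Irreducible weilHRat := by
  obtain ⟨x, hx⟩ := Complex.exists_root (f := weilH) (by
    rw [← natDegree_pos_iff_degree_pos, weilH_natDegree]; norm_num)
  have haeval (p : ℚ[X]) (z : ℂ) : aeval z p = (p.map (algebraMap ℚ ℂ)).eval z :=
    (eval_map_algebraMap p z).symm
  refine weilHRat_monic.irreducible_of_aeval_eq_zero_of_mem_adjoin irreducible_weilHSq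
    (weilHRat_natDegree.trans weilHSq_natDegree.symm).le (y := x ^ 2) ?_
    (pow_mem (IntermediateField.mem_adjoin_simple_self ℚ x) 2) ?_
  · rw [haeval, map_weilHRat, hx]
  · rw [haeval, eval_map_weilHSq, hx, zero_mul]

theorem irreducible_weilHCube : Irreducible weilHCube :=
  irreducible_C_mul_comp_C_mul_X irreducible_weilHRat (by norm_num) (by norm_num)

theorem stmt5 :
    ∀ n : ℕ, n = 2 ∨ n = 3 →
      ∃ Q : Polynomial ℚ,
        Q.map (algebraMap ℚ ℂ) = (weilH.roots.map (fun α => X - C (α ^ n))).prod ∧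
        Irreducible Q := by
  rintro n (rfl | rfl)
  · exact ⟨weilHSq, prod_roots_sq_weilH.symm, irreducible_weilHSq⟩
  · exact ⟨weilHCube, prod_roots_cube_weilH.symm, irreducible_weilHCube⟩
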